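/- arXiv:2409.20489 — 3 statements merged into one kernel-verified Lean document; each statement's English description precedes it below -/
import Mathlib

section
/- Let μ : ℝ → ℝ be monotone increasing and L_μ-Lipschitz, M positive definite, and suppose ‖θ* - θ̂‖_M ≤ β. With θ̃ := θ̂ + β(M⁻¹x)/√(xᵀM⁻¹x) for x ≠ 0, we have both μ(⟪x,θ̃⟫) ≥ μ(⟪x,θ*⟫) and μ(⟪x,θ̃⟫) - μ(⟪x,θ*⟫) ≤ 2 L_μ β ‖x‖_{M⁻¹}. -/
open Matrix

/-!
The optimistic parameter `θ̃` moves `θ̂` by `β` in the `M`-norm in the direction that maximises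
`⟪x, ·⟫`, so `⟪x, θ̃⟫ = ⟪x, θ̂⟫ + β ‖x‖_{M⁻¹}`. By the weighted Cauchy–Schwarz inequality
`|⟪x, v⟫| ≤ ‖x‖_{M⁻¹} ‖v‖_M`, the confidence bound gives `|⟪x, θ* - θ̂⟫| ≤ β ‖x‖_{M⁻¹}`, hence
`0 ≤ ⟪x, θ̃⟫ - ⟪x, θ*⟫ ≤ 2 β ‖x‖_{M⁻¹}`; monotonicity and the Lipschitz bound of `μ` finish.
-/

namespace Matrix

variable {n : Type*} [Fintype n]

theorem PosSemidef.abs_dotProduct_mulVec_le {M : Matrix n n ℝ} (hM : M.PosSemidef)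
    (u v : n → ℝ) : |u ⬝ᵥ M *ᵥ v| ≤ √(u ⬝ᵥ M *ᵥ u) * √(v ⬝ᵥ M *ᵥ v) := by
  let _ := M.toSeminormedAddCommGroup hM
  let _ := M.toInnerProductSpace hM
  have hinner (x y : n → ℝ) : inner ℝ x y = x ⬝ᵥ M *ᵥ y := by
    show (M *ᵥ y) ⬝ᵥ star x = _
    simp [dotProduct_comm]
  have := abs_real_inner_le_norm u v
  rwa [norm_eq_sqrt_real_inner, norm_eq_sqrt_real_inner, hinner, hinner, hinner] at this

theorem PosDef.abs_dotProduct_le [DecidableEq n] {M : Matrix n n ℝ} (hM : M.PosDef)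
    (x v : n → ℝ) : |x ⬝ᵥ v| ≤ √(x ⬝ᵥ M⁻¹ *ᵥ x) * √(v ⬝ᵥ M *ᵥ v) := by
  have hv : M⁻¹ *ᵥ (M *ᵥ v) = v := by
    rw [mulVec_mulVec, nonsing_inv_mul M hM.det_pos.ne'.isUnit, one_mulVec]
  simpa [hv, dotProduct_comm (M *ᵥ v) v] using
    hM.inv.posSemidef.abs_dotProduct_mulVec_le x (M *ᵥ v)

/-- No positivity is needed: `a / √a = √a` for every real `a`, as `√a = 0` when `a ≤ 0`. -/
theorem dotProduct_add_div_sqrt_smul (x y θ : n → ℝ) (β : ℝ) :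
    x ⬝ᵥ (θ + (β / √(x ⬝ᵥ y)) • y) = x ⬝ᵥ θ + β * √(x ⬝ᵥ y) := by
  rw [dotProduct_add, dotProduct_smul, smul_eq_mul, div_mul_eq_mul_div, mul_div_assoc,
    Real.div_sqrt]

end Matrix

theorem stmt_5_general {d : ℕ} (μ : ℝ → ℝ) (hmono : Monotone μ) (Lμ : ℝ) (hLμ : 0 ≤ Lμ)
    (hLip : ∀ a b : ℝ, |μ a - μ b| ≤ Lμ * |a - b|)
    (M : Matrix (Fin d) (Fin d) ℝ) (hM : M.PosDef)
    (θhat θstar : Fin d → ℝ) (β : ℝ)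
    (hconf : Real.sqrt ((θstar - θhat) ⬝ᵥ (M *ᵥ (θstar - θhat))) ≤ β)
    (x : Fin d → ℝ)
    (θtilde : Fin d → ℝ)
    (hθtilde : θtilde = θhat + (β / Real.sqrt (x ⬝ᵥ (M⁻¹ *ᵥ x))) • (M⁻¹ *ᵥ x)) :
    μ (x ⬝ᵥ θstar) ≤ μ (x ⬝ᵥ θtilde) ∧
      μ (x ⬝ᵥ θtilde) - μ (x ⬝ᵥ θstar) ≤
        2 * Lμ * β * Real.sqrt (x ⬝ᵥ (M⁻¹ *ᵥ x)) := by
  set w := √(x ⬝ᵥ M⁻¹ *ᵥ x)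
  have hdev : |x ⬝ᵥ (θstar - θhat)| ≤ β * w :=
    calc |x ⬝ᵥ (θstar - θhat)| ≤ w * √((θstar - θhat) ⬝ᵥ M *ᵥ (θstar - θhat)) :=
          hM.abs_dotProduct_le x _
      _ ≤ w * β := mul_le_mul_of_nonneg_left hconf (Real.sqrt_nonneg _)
      _ = β * w := mul_comm _ _
  have htilde : x ⬝ᵥ θtilde = x ⬝ᵥ θhat + β * w := by
    rw [hθtilde, dotProduct_add_div_sqrt_smul]
  rw [dotProduct_sub, abs_le] at hdev
  have hgap : x ⬝ᵥ θtilde - x ⬝ᵥ θstar ∈ Set.Icc 0 (2 * β * w) := by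
    constructor <;> linarith
  refine ⟨hmono (sub_nonneg.mp hgap.1), ?_⟩
  calc μ (x ⬝ᵥ θtilde) - μ (x ⬝ᵥ θstar)
      ≤ Lμ * |x ⬝ᵥ θtilde - x ⬝ᵥ θstar| := (le_abs_self _).trans (hLip _ _)
    _ ≤ Lμ * (2 * β * w) := by
      rw [abs_of_nonneg hgap.1]
      exact mul_le_mul_of_nonneg_left hgap.2 hLμ
    _ = 2 * Lμ * β * w := by ring

/-- Per-round optimism and error bound for generalized linear bandits: with `μ`
monotone increasing and `Lμ`-Lipschitz, `‖θ* - θ̂‖_M ≤ β`, and the optimistic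
estimate `θ̃`, we have `μ(⟪x,θ̃⟫) ≥ μ(⟪x,θ*⟫)` and
`μ(⟪x,θ̃⟫) - μ(⟪x,θ*⟫) ≤ 2 Lμ β ‖x‖_{M⁻¹}`. -/
theorem stmt_5 {d : ℕ} (μ : ℝ → ℝ) (hmono : Monotone μ) (Lμ : ℝ) (hLμ : 0 ≤ Lμ)
    (hLip : ∀ a b : ℝ, |μ a - μ b| ≤ Lμ * |a - b|)
    (M : Matrix (Fin d) (Fin d) ℝ) (hM : M.PosDef)
    (θhat θstar : Fin d → ℝ) (β : ℝ)
    (hconf : Real.sqrt ((θstar - θhat) ⬝ᵥ (M *ᵥ (θstar - θhat))) ≤ β)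
    (x : Fin d → ℝ) (hx : x ≠ 0)
    (θtilde : Fin d → ℝ)
    (hθtilde : θtilde = θhat + (β / Real.sqrt (x ⬝ᵥ (M⁻¹ *ᵥ x))) • (M⁻¹ *ᵥ x)) :
    μ (x ⬝ᵥ θstar) ≤ μ (x ⬝ᵥ θtilde) ∧
      μ (x ⬝ᵥ θtilde) - μ (x ⬝ᵥ θstar) ≤
        2 * Lμ * β * Real.sqrt (x ⬝ᵥ (M⁻¹ *ᵥ x)) :=
  stmt_5_general μ hmono Lμ hLμ hLip M hM θhat θstar β hconf x θtilde hθtilde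
end

section
/- Suppose for each time t, random variables r̃_t, c̃_t and action ã_t satisfy the optimism properties E[r̃*_t | history] ≥ OPT/T and E[c̃*_t | history] ≤ B/T for the optimal static action, and the algorithm's choice satisfies r̃_t - Zγ_t c̃_t ≥ r̃*_t - Zγ_t c̃*_t pointwise with γ_t ≥ 0, Z ≥ 0. Then for any stopping time T_stop ≤ T, Σ_{t=1}^{T_stop} E[r̃_t] ≥ (T_stop/T)·OPT + Z·Σ_{t=1}^{T_stop} γ_t·E[c̃_t - B/T]. -/
/-! Optimism bounds the optimal action's Lagrangian value `r̃* − Zγ c̃*` from below by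
`OPT/T − Zγ B/T`, and the algorithm's choice maximises the Lagrangian, so every round earns at
least `OPT/T + Zγ_t (c̃_t − B/T)`; summing over the first `T_stop` rounds gives the claim. -/

open Finset

theorem add_mul_sub_le_of_lagrangian_le {ρ κ r c rstar cstar w : ℝ} (hw : 0 ≤ w)
    (hr : ρ ≤ rstar) (hc : cstar ≤ κ) (hchoice : rstar - w * cstar ≤ r - w * c) :
    ρ + w * (c - κ) ≤ r := by
  have hcost : w * cstar ≤ w * κ := mul_le_mul_of_nonneg_left hc hw
  linarith

theorem card_mul_add_sum_le_sum_of_lagrangian_le {ι : Type*} (s : Finset ι) {ρ κ : ℝ}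
    {r c rstar cstar w : ι → ℝ} (hw : ∀ i, 0 ≤ w i) (hr : ∀ i, ρ ≤ rstar i)
    (hc : ∀ i, cstar i ≤ κ) (hchoice : ∀ i, rstar i - w i * cstar i ≤ r i - w i * c i) :
    #s * ρ + ∑ i ∈ s, w i * (c i - κ) ≤ ∑ i ∈ s, r i := by
  rw [← nsmul_eq_mul, ← sum_const, ← sum_add_distrib]
  exact sum_le_sum fun i _ ↦
    add_mul_sub_le_of_lagrangian_le (hw i) (hr i) (hc i) (hchoice i)

theorem stmt_8_general (T : ℕ) (OPT B Z : ℝ) (hZ : 0 ≤ Z)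
    (r c rstar cstar γ : ℕ → ℝ) (hγ : ∀ t, 0 ≤ γ t)
    (hopt_r : ∀ t, OPT / T ≤ rstar t)
    (hopt_c : ∀ t, cstar t ≤ B / T)
    (hchoice : ∀ t, rstar t - Z * γ t * cstar t ≤ r t - Z * γ t * c t)
    (Tstop : ℕ) :
    (Tstop : ℝ) / T * OPT + Z * ∑ t ∈ Finset.range Tstop, γ t * (c t - B / T) ≤
      ∑ t ∈ Finset.range Tstop, r t := by
  have hsum := card_mul_add_sum_le_sum_of_lagrangian_le (range Tstop)
    (fun t ↦ mul_nonneg hZ (hγ t)) hopt_r hopt_c hchoice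
  rw [card_range] at hsum
  calc (Tstop : ℝ) / T * OPT + Z * ∑ t ∈ range Tstop, γ t * (c t - B / T)
      = Tstop * (OPT / T) + ∑ t ∈ range Tstop, Z * γ t * (c t - B / T) := by
        simp only [mul_sum, mul_assoc, div_mul_eq_mul_div, mul_div_assoc]
    _ ≤ ∑ t ∈ range Tstop, r t := hsum

/-- Lemma 8 of Agrawal–Devanur, deterministic/conditional-expectation version:
optimism of the per-round estimates plus optimality of the algorithm's choice yields
`Σ_{t<T_stop} r̃_t ≥ (T_stop/T)·OPT + Z Σ_{t<T_stop} γ_t (c̃_t − B/T)`. -/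
theorem stmt_8 (T : ℕ) (hT : 0 < T) (OPT B Z : ℝ) (hZ : 0 ≤ Z)
    (r c rstar cstar γ : ℕ → ℝ) (hγ : ∀ t, 0 ≤ γ t)
    (hopt_r : ∀ t, OPT / T ≤ rstar t)
    (hopt_c : ∀ t, cstar t ≤ B / T)
    (hchoice : ∀ t, rstar t - Z * γ t * cstar t ≤ r t - Z * γ t * c t)
    (Tstop : ℕ) (hstop : Tstop ≤ T) :
    (Tstop : ℝ) / T * OPT + Z * ∑ t ∈ Finset.range Tstop, γ t * (c t - B / T) ≤
      ∑ t ∈ Finset.range Tstop, r t :=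
  stmt_8_general T OPT B Z hZ r c rstar cstar γ hγ hopt_r hopt_c hchoice Tstop
end

section
/- Let μ' ≥ κ > 0 on ℝ and M := Σ_i x_i x_iᵀ be positive definite. If θ̂ solves Σ_i (y_i − μ(x_iᵀθ̂))x_i = 0 and θ* satisfies y_i = μ(x_iᵀθ*) + η_i, then ‖θ̂ − θ*‖_M ≤ (1/κ)·‖Σ_i η_i x_i‖_{M⁻¹}. -/
/-!
Write `Δ = θ̂ - θ*` and `S = Σ_i η_i x_i`. Since `μ' ≥ κ`, the map `μ` is `κ`-strongly monotone, so
`κ ‖Δ‖_M² = κ Σ_i (x_iᵀΔ)² ≤ Σ_i (μ(x_iᵀθ̂) - μ(x_iᵀθ*)) x_iᵀΔ = ΔᵀS`, the last equality being the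
score equation rewritten through the model. Cauchy–Schwarz for the inner product `⟨u, v⟩ = uᵀMv`,
applied to `Δ` and `M⁻¹S`, gives `ΔᵀS ≤ ‖Δ‖_M ‖S‖_{M⁻¹}`; dividing by `κ ‖Δ‖_M` concludes.
-/

open Matrix

theorem Matrix.PosSemidef.dotProduct_mulVec_sq_le {n : Type*} [Fintype n]
    {M : Matrix n n ℝ} (hM : M.PosSemidef) (u v : n → ℝ) :
    (u ⬝ᵥ (M *ᵥ v)) ^ 2 ≤ (u ⬝ᵥ (M *ᵥ u)) * (v ⬝ᵥ (M *ᵥ v)) := by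
  let := M.toSeminormedAddCommGroup hM
  let := M.toInnerProductSpace hM
  -- the inner product induced by `M` is `⟪u, v⟫ = (M *ᵥ v) ⬝ᵥ u` definitionally
  have h := real_inner_mul_inner_self_le u v
  simp only [dotProduct_comm u, dotProduct_comm v, sq]
  exact h

theorem Matrix.PosDef.dotProduct_sq_le {n : Type*} [Fintype n] [DecidableEq n]
    {M : Matrix n n ℝ} (hM : M.PosDef) (u w : n → ℝ) :
    (u ⬝ᵥ w) ^ 2 ≤ (u ⬝ᵥ (M *ᵥ u)) * (w ⬝ᵥ (M⁻¹ *ᵥ w)) := by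
  have hw : M *ᵥ (M⁻¹ *ᵥ w) = w := by
    rw [mulVec_mulVec, mul_nonsing_inv M hM.det_pos.ne'.isUnit, one_mulVec]
  simpa only [hw, dotProduct_comm (M⁻¹ *ᵥ w)] using
    hM.posSemidef.dotProduct_mulVec_sq_le u (M⁻¹ *ᵥ w)

theorem dotProduct_sum_vecMulVec_mulVec {ι n R : Type*} [Fintype ι] [Fintype n] [CommSemiring R]
    (x : ι → n → R) (v : n → R) :
    v ⬝ᵥ ((∑ i, vecMulVec (x i) (x i)) *ᵥ v) = ∑ i, (x i ⬝ᵥ v) ^ 2 := by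
  simp only [sum_mulVec, dotProduct_sum, vecMulVec_mulVec, op_smul_eq_smul, dotProduct_smul,
    smul_eq_mul]
  exact Finset.sum_congr rfl fun i _ => by rw [dotProduct_comm v, sq]

theorem mul_sq_sub_le_of_le_deriv {f f' : ℝ → ℝ} {κ : ℝ}
    (hf : ∀ z, HasDerivAt f (f' z) z) (hκ : ∀ z, κ ≤ f' z) (a b : ℝ) :
    κ * (a - b) ^ 2 ≤ (f a - f b) * (a - b) := by
  have hmono : Monotone fun t => f t - κ * t :=
    monotone_of_hasDerivAt_nonneg (fun t => ((hf t).sub ((hasDerivAt_id t).const_mul κ)))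
      (fun t => by simpa using hκ t)
  rcases le_total b a with h | h
  · nlinarith [hmono h]
  · nlinarith [hmono h]

theorem Real.sqrt_le_one_div_mul_sqrt_of_mul_le {κ Q p B : ℝ} (hκ : 0 < κ) (hQ : 0 ≤ Q)
    (hp : κ * Q ≤ p) (hpB : p ^ 2 ≤ Q * B) : √Q ≤ 1 / κ * √B := by
  rcases hQ.eq_or_lt with rfl | hQ
  · simp only [Real.sqrt_zero]
    positivity
  have hB : κ ^ 2 * Q ≤ B := by
    have : (κ * Q) ^ 2 ≤ Q * B := (pow_le_pow_left₀ (by positivity) hp 2).trans hpB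
    nlinarith
  rw [one_div_mul_eq_div, le_div_iff₀ hκ, mul_comm, ← Real.sqrt_sq hκ.le,
    ← Real.sqrt_mul (sq_nonneg _)]
  exact Real.sqrt_le_sqrt hB

/-- Deterministic estimation-error bound for the GLM maximum-likelihood estimator:
if `θ̂` solves the score equation and `y_i = μ(x_iᵀθ*) + η_i`, then
`‖θ̂ − θ*‖_M ≤ (1/κ) ‖Σ_i η_i x_i‖_{M⁻¹}`. -/
theorem stmt_13 {d n : ℕ} (μ μ' : ℝ → ℝ) (κ : ℝ) (hκ : 0 < κ)
    (hderiv : ∀ z : ℝ, HasDerivAt μ (μ' z) z) (hlb : ∀ z : ℝ, κ ≤ μ' z)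
    (x : Fin n → Fin d → ℝ) (y η : Fin n → ℝ)
    (M : Matrix (Fin d) (Fin d) ℝ)
    (hMdef : M = ∑ i, Matrix.vecMulVec (x i) (x i)) (hM : M.PosDef)
    (θhat θstar : Fin d → ℝ)
    (hmle : ∑ i, (y i - μ (x i ⬝ᵥ θhat)) • x i = 0)
    (hmodel : ∀ i, y i = μ (x i ⬝ᵥ θstar) + η i) :
    Real.sqrt ((θhat - θstar) ⬝ᵥ (M *ᵥ (θhat - θstar))) ≤
      (1 / κ) * Real.sqrt ((∑ i, η i • x i) ⬝ᵥ (M⁻¹ *ᵥ ∑ i, η i • x i)) := by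
  have hscore : ∑ i, (μ (x i ⬝ᵥ θhat) - μ (x i ⬝ᵥ θstar)) • x i = ∑ i, η i • x i := by
    have hterm (i : Fin n) : (y i - μ (x i ⬝ᵥ θhat)) • x i
        = η i • x i - (μ (x i ⬝ᵥ θhat) - μ (x i ⬝ᵥ θstar)) • x i := by
      rw [hmodel, ← sub_smul]
      ring_nf
    rw [Finset.sum_congr rfl fun i _ => hterm i, Finset.sum_sub_distrib, sub_eq_zero] at hmle
    exact hmle.symm
  have hQ : κ * ((θhat - θstar) ⬝ᵥ (M *ᵥ (θhat - θstar)))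
      ≤ (θhat - θstar) ⬝ᵥ ∑ i, η i • x i := by
    rw [← hscore, hMdef, dotProduct_sum_vecMulVec_mulVec, dotProduct_sum, Finset.mul_sum]
    gcongr with i
    rw [dotProduct_smul, smul_eq_mul, dotProduct_comm (θhat - θstar), dotProduct_sub]
    exact mul_sq_sub_le_of_le_deriv hderiv hlb _ _
  exact Real.sqrt_le_one_div_mul_sqrt_of_mul_le hκ (hM.posSemidef.dotProduct_mulVec_nonneg _) hQ
    (hM.dotProduct_sq_le _ _)
end
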